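/- For μ = (μ_1, μ_2, μ_3), the Gauss decomposition blocks satisfy [E_{1;i,j}(u), F_{2;h,k}(v)] = 0 in Y_{(μ_1,μ_2,μ_3)}((u^{-1},v^{-1})), for all 1 ≤ i ≤ μ_1, 1 ≤ j,k ≤ μ_2, 1 ≤ h ≤ μ_3. -/

import Mathlib

noncomputable section

namespace SuperYangian

/-- The sign `(-1)^x` for `x : ZMod 2`. -/
def sgn (x : ZMod 2) : ℂ := if x = 0 then 1 else -1

variable {A : Type*}

/-- The supercommutator `[x, y] = x*y - ε • (y*x)` with prescribed sign `ε`
(for homogeneous `x`, `y` one takes `ε = (-1)^{|x||y|}`). -/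
def scomm [Ring A] [Algebra ℂ A] (ε : ℂ) (x y : A) : A := x * y - ε • (y * x)

/-- `off μ a = μ 0 + ⋯ + μ (a-1)`. -/
def off (μ : ℕ → ℕ) (a : ℕ) : ℕ := ∑ b ∈ Finset.range a, μ b

/-- A family `t i j r` (the coefficient of `u^{-r}` in `t_{ij}(u)`, with 0-based
indices `i j < d`) satisfying the defining RTT relations of the super Yangian
`Y(gl_{M|N})` with parity sequence `p`; the super Yangian itself, via
`t_{i+1,j+1}^{(r)} = t i j r`, is the universal such family. -/
structure RTT (A : Type*) [Ring A] [Algebra ℂ A] (d : ℕ) (p : ℕ → ZMod 2) where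
  t : ℕ → ℕ → ℕ → A
  t_zero : ∀ i j, t i j 0 = if i = j then (1 : A) else 0
  rtt : ∀ i j h k r s : ℕ, i < d → j < d → h < d → k < d →
    scomm (sgn ((p i + p j) * (p h + p k))) (t i j r) (t h k s) =
      sgn (p i * p j + p i * p h + p j * p h) •
        ∑ g ∈ Finset.range (min r s),
          (t h j g * t i k (r + s - 1 - g) - t h j (r + s - 1 - g) * t i k g)

/-- Gauss decomposition data `T(u) = F(u) D(u) E(u)` with respect to the composition
`μ = (μ 0, …, μ (n-1))`, in coefficient form.  `E a b i j r` is the coefficient of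
`u^{-r}` in the `(i,j)`-entry of the block `E_{a,b}(u)` (0-based blocks and entries),
extended by the identity on the diagonal blocks and by `0` below them; similarly `F`.
`D a` are the diagonal blocks and `D' a` their inverses.  Since the Gauss
decomposition is unique, this data consists exactly of the quasideterminant blocks. -/
structure Gauss [Ring A] [Algebra ℂ A] (T : ℕ → ℕ → ℕ → A) (n : ℕ) (μ : ℕ → ℕ) where
  D : ℕ → ℕ → ℕ → ℕ → A
  D' : ℕ → ℕ → ℕ → ℕ → A
  E : ℕ → ℕ → ℕ → ℕ → ℕ → A
  F : ℕ → ℕ → ℕ → ℕ → ℕ → A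
  E_diag : ∀ a i j r, E a a i j r = if i = j ∧ r = 0 then 1 else 0
  E_low : ∀ a b i j r, b < a → E a b i j r = 0
  E_zero : ∀ a b i j, a < b → E a b i j 0 = 0
  F_diag : ∀ a i j r, F a a i j r = if i = j ∧ r = 0 then 1 else 0
  F_high : ∀ a b i j r, a < b → F a b i j r = 0
  F_zero : ∀ a b i j, b < a → F a b i j 0 = 0
  D_zero : ∀ a i j, D a i j 0 = if i = j then (1 : A) else 0
  D_inv : ∀ a i j r, a < n → i < μ a → j < μ a →
    ∑ q ∈ Finset.range (μ a), ∑ e ∈ Finset.range (r + 1), D a i q e * D' a q j (r - e) =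
      if i = j ∧ r = 0 then 1 else 0
  D_inv' : ∀ a i j r, a < n → i < μ a → j < μ a →
    ∑ q ∈ Finset.range (μ a), ∑ e ∈ Finset.range (r + 1), D' a i q e * D a q j (r - e) =
      if i = j ∧ r = 0 then 1 else 0
  decomp : ∀ a b i j r, a < n → b < n → i < μ a → j < μ b →
    T (off μ a + i) (off μ b + j) r =
      ∑ c ∈ Finset.range n, ∑ q1 ∈ Finset.range (μ c), ∑ q2 ∈ Finset.range (μ c),
        ∑ e1 ∈ Finset.range (r + 1), ∑ e2 ∈ Finset.range (r + 1 - e1),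
          F a c i q1 e1 * D c q1 q2 e2 * E c b q2 j (r - e1 - e2)

/-!
Write `t_{x,μ₀+k}(v) = (T E⁻¹)_{x,μ₀+k}(v) + ∑_q t_{xq}(v) e_{qk}(v)` and apply the RTT relation to
both `t`'s: for `i` in block row 0 this expresses `(u - v) [t_{iy}(u), (T E⁻¹)_{x,μ₀+k}(v)]` through
the commutators `[t_{iy}(u), e_{qk}(v)]`. In the rows `x < μ₀` the left side vanishes, which
determines those commutators after cancelling the invertible `D₀(v)`, and leaves a closed master
relation. As `T E⁻¹ = F D` is `D₁` in block row 1 and `F₂₁ D₁` in block row 2, comparing the master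
relation in these two block rows shows that `t_{iy}(u)` supercommutes with `F₂₁(v)` whenever `y`
lies in block column 0 or 1 (cancel `D₁(v)` and the non-zero-divisor `v⁻¹ - u⁻¹`). Finally
`E₀₁ = T₀₀⁻¹ T₀₁`, and both factors supercommute with `F₂₁(v)`.
-/

open Finset PowerSeries

lemma sgn_add (a b : ZMod 2) : sgn (a + b) = sgn a * sgn b := by
  have h : ∀ x : ZMod 2, x = 0 ∨ x = 1 := by decide
  rcases h a with rfl | rfl <;> rcases h b with rfl | rfl <;>
    simp [sgn, show (1 + 1 : ZMod 2) = 0 from rfl]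

lemma sgn_smul_sgn_smul {B : Type*} [AddCommGroup B] [Module ℂ B] (a : ZMod 2) (x : B) :
    sgn a • sgn a • x = x := by
  rw [smul_smul, ← sgn_add, CharTwo.add_self_eq_zero, sgn, if_pos rfl, one_smul]

lemma sgn_smul_eq_zero_iff {B : Type*} [AddCommGroup B] [Module ℂ B] (a : ZMod 2) {x : B} :
    sgn a • x = 0 ↔ x = 0 :=
  ⟨fun h => by rw [← sgn_smul_sgn_smul a x, h, smul_zero], fun h => by rw [h, smul_zero]⟩

section Supercommutator

variable {B : Type*} [Ring B] [Algebra ℂ B]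

lemma scomm_zero_right (ε : ℂ) (x : B) : scomm ε x 0 = 0 := by
  simp [scomm]

lemma scomm_sub_right (ε : ℂ) (x y z : B) : scomm ε x (y - z) = scomm ε x y - scomm ε x z := by
  simp only [scomm, mul_sub, sub_mul, smul_sub]; abel

lemma scomm_sum_right {ι : Type*} (ε : ℂ) (x : B) (s : Finset ι) (y : ι → B) :
    scomm ε x (∑ q ∈ s, y q) = ∑ q ∈ s, scomm ε x (y q) := by
  simp only [scomm, mul_sum, sum_mul, smul_sum, sum_sub_distrib]

lemma scomm_sum_left {ι : Type*} (ε : ℂ) (s : Finset ι) (x : ι → B) (y : B) :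
    scomm ε (∑ q ∈ s, x q) y = ∑ q ∈ s, scomm ε (x q) y := by
  simp only [scomm, mul_sum, sum_mul, smul_sum, sum_sub_distrib]

lemma scomm_mul_right (ε₁ ε₂ : ℂ) (x y z : B) :
    scomm (ε₁ * ε₂) x (y * z) = scomm ε₁ x y * z + ε₁ • (y * scomm ε₂ x z) := by
  simp only [scomm, mul_sub, sub_mul, smul_sub, smul_smul, mul_assoc, smul_mul_assoc,
    mul_smul_comm]
  abel

lemma scomm_mul_left (ε₁ ε₂ : ℂ) (x y z : B) :
    scomm (ε₁ * ε₂) (x * y) z = x * scomm ε₂ y z + ε₂ • (scomm ε₁ x z * y) := by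
  simp only [scomm, mul_sub, sub_mul, smul_sub, smul_smul, mul_assoc, smul_mul_assoc,
    mul_smul_comm, mul_comm ε₁ ε₂]
  abel

/-- Graded Leibniz rule for a matrix product: `y q` has degree `b + deg q` and `z q` has degree
`deg q + c`. -/
lemma mul_scomm_sum_mul (w : B) (hw : ∀ P, Commute w P) (a b c : ZMod 2) (deg : ℕ → ZMod 2)
    (x : B) (s : Finset ℕ) (y z : ℕ → B) :
    w * scomm (sgn (a * (b + c))) x (∑ q ∈ s, y q * z q) =
      ∑ q ∈ s, ((w * scomm (sgn (a * (b + deg q))) x (y q)) * z q +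
        sgn (a * (b + deg q)) • (y q * (w * scomm (sgn (a * (deg q + c))) x (z q)))) := by
  rw [scomm_sum_right, mul_sum]
  refine sum_congr rfl fun q _ => ?_
  have hsplit : a * (b + c) = a * (b + deg q) + a * (deg q + c) := by grind
  rw [hsplit, sgn_add, scomm_mul_right, mul_add, ← mul_assoc, mul_smul_comm, ← mul_assoc,
    (hw (y q)).eq, mul_assoc (y q)]

lemma scomm_sum_mul_left (a c e : ZMod 2) (deg : ℕ → ZMod 2) (s : Finset ℕ) (y z : ℕ → B)
    (x : B) :
    scomm (sgn ((a + c) * e)) (∑ q ∈ s, y q * z q) x =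
      ∑ q ∈ s, (y q * scomm (sgn ((deg q + c) * e)) (z q) x +
        sgn ((deg q + c) * e) • (scomm (sgn ((a + deg q) * e)) (y q) x * z q)) := by
  rw [scomm_sum_left]
  refine sum_congr rfl fun q _ => ?_
  have hsplit : (a + c) * e = (a + deg q) * e + (deg q + c) * e := by grind
  rw [hsplit, sgn_add, scomm_mul_left]

end Supercommutator

section Cancellation

variable {R : Type*} [Ring R] {m : ℕ} {B B' : ℕ → ℕ → R}

lemma eq_zero_of_mul_sum_eq_zero
    (hinv : ∀ i j, i < m → j < m → ∑ q ∈ range m, B' i q * B q j = if i = j then 1 else 0)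
    {Z : ℕ → R} (hZ : ∀ i < m, ∑ q ∈ range m, B i q * Z q = 0) {j : ℕ} (hj : j < m) :
    Z j = 0 := by
  calc Z j = ∑ q ∈ range m, (if j = q then 1 else 0) * Z q := by simp [hj]
    _ = ∑ i ∈ range m, B' j i * ∑ q ∈ range m, B i q * Z q := by
      simp only [mul_sum, ← mul_assoc]
      rw [sum_comm]
      refine sum_congr rfl fun q hq => ?_
      rw [← sum_mul, hinv j q hj (mem_range.mp hq)]
    _ = 0 := sum_eq_zero fun i hi => by rw [hZ i (mem_range.mp hi), mul_zero]

lemma eq_zero_of_sum_mul_eq_zero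
    (hinv : ∀ i j, i < m → j < m → ∑ q ∈ range m, B i q * B' q j = if i = j then 1 else 0)
    {Z : ℕ → R} (hZ : ∀ j < m, ∑ q ∈ range m, Z q * B q j = 0) {i : ℕ} (hi : i < m) :
    Z i = 0 := by
  calc Z i = ∑ q ∈ range m, Z q * (if q = i then 1 else 0) := by simp [hi]
    _ = ∑ j ∈ range m, (∑ q ∈ range m, Z q * B q j) * B' j i := by
      simp only [sum_mul, mul_assoc]
      rw [sum_comm]
      refine sum_congr rfl fun q hq => ?_
      rw [← mul_sum, hinv q i (mem_range.mp hq) hi]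
    _ = 0 := sum_eq_zero fun j hj => by rw [hZ j (mem_range.mp hj), zero_mul]

end Cancellation

section TwoVariables

variable [Ring A]

/-- `u⁻¹ = uInv` is the inner and `v⁻¹ = vInv` the outer variable: a series in `u⁻¹` is embedded
as a constant, a series in `v⁻¹` coefficientwise. -/
def inU : PowerSeries A →+* PowerSeries (PowerSeries A) := C

def inV : PowerSeries A →+* PowerSeries (PowerSeries A) := map C

def uInv : PowerSeries (PowerSeries A) := C X

def vInv : PowerSeries (PowerSeries A) := X

lemma commute_uInv (P : PowerSeries (PowerSeries A)) : Commute uInv P := by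
  ext s : 1
  rw [uInv, coeff_C_mul, coeff_mul_C]
  exact (commute_X _).symm.eq

lemma commute_vInv (P : PowerSeries (PowerSeries A)) : Commute vInv P :=
  (commute_X P).symm

lemma commute_vInv_sub_uInv (P : PowerSeries (PowerSeries A)) : Commute (vInv - uInv) P :=
  (commute_vInv P).sub_left (commute_uInv P)

lemma commute_uInv_mul_vInv (P : PowerSeries (PowerSeries A)) : Commute (uInv * vInv) P :=
  (commute_uInv P).mul_left (commute_vInv P)

lemma coeff_coeff_inU_mul_inV (r s : ℕ) (f g : PowerSeries A) :
    coeff r (coeff s (inU f * inV g)) = coeff r f * coeff s g := by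
  simp [inU, inV, coeff_C_mul, coeff_map]

lemma coeff_coeff_inV_mul_inU (r s : ℕ) (f g : PowerSeries A) :
    coeff r (coeff s (inV g * inU f)) = coeff s g * coeff r f := by
  simp [inU, inV, coeff_mul_C, coeff_map]

lemma coeff_coeff_smul [Algebra ℂ A] (c : ℂ) (r s : ℕ) (P : PowerSeries (PowerSeries A)) :
    coeff r (coeff s (c • P)) = c • coeff r (coeff s P) := by
  simp

lemma coeff_coeff_scomm_inU_inV [Algebra ℂ A] (ε : ℂ) (r s : ℕ) (f g : PowerSeries A) :
    coeff r (coeff s (scomm ε (inU f) (inV g))) = scomm ε (coeff r f) (coeff s g) := by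
  simp [scomm, coeff_coeff_inU_mul_inV, coeff_coeff_inV_mul_inU]

lemma coeff_coeff_uInv_mul (r s : ℕ) (P : PowerSeries (PowerSeries A)) :
    coeff r (coeff s (uInv * P)) = if r = 0 then 0 else coeff (r - 1) (coeff s P) := by
  rcases r with _ | r <;> simp [uInv, coeff_C_mul, coeff_succ_X_mul]

lemma coeff_coeff_vInv_mul (r s : ℕ) (P : PowerSeries (PowerSeries A)) :
    coeff r (coeff s (vInv * P)) = if s = 0 then 0 else coeff r (coeff (s - 1) P) := by
  rcases s with _ | s <;> simp [vInv, coeff_succ_X_mul]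

lemma eq_zero_of_vInv_sub_uInv_mul_eq_zero {M : PowerSeries (PowerSeries A)}
    (h : (vInv - uInv) * M = 0) : M = 0 := by
  ext s : 1
  induction s with
  | zero =>
    have h0 := congrArg (coeff 0) h
    simp only [sub_mul, map_sub, vInv, uInv, coeff_zero_X_mul, coeff_C_mul, map_zero,
      zero_sub, neg_eq_zero] at h0
    simpa using X_mul_cancel (h0.trans (mul_zero X).symm)
  | succ n ih =>
    have h0 := congrArg (coeff (n + 1)) h
    simp only [sub_mul, map_sub, vInv, uInv, coeff_succ_X_mul, coeff_C_mul, map_zero, ih,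
      zero_sub, neg_eq_zero] at h0
    simpa using X_mul_cancel (h0.trans (mul_zero X).symm)

end TwoVariables

lemma sum_range_min_sub_sum_range_min {M : Type*} [AddCommGroup M] (f : ℕ → ℕ → M) (r s : ℕ) :
    ∑ g ∈ range (min (r + 1) s), (f g (r + s - g) - f (r + s - g) g) -
      ∑ g ∈ range (min r (s + 1)), (f g (r + s - g) - f (r + s - g) g) = f r s - f s r := by
  rcases lt_trichotomy r s with h | rfl | h
  · rw [min_eq_left (by omega), min_eq_left (by omega), sum_range_succ, add_sub_cancel_left,
      show r + s - r = s by omega]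
  · rw [min_eq_right (by omega), min_eq_left (by omega), sub_self, sub_self]
  · rw [min_eq_right (by omega), min_eq_right (by omega), sum_range_succ, sub_add_cancel_left,
      show r + s - s = r by omega, neg_sub]

section RTTSeries

variable [Ring A] [Algebra ℂ A] {d : ℕ} {p : ℕ → ZMod 2} (S : RTT A d p)

lemma scomm_t_zero_left (x y : ℕ) (ε : ZMod 2) (b : A) :
    scomm (sgn ((p x + p y) * ε)) (S.t x y 0) b = 0 := by
  rw [S.t_zero]
  split_ifs with h
  · simp [h, scomm, CharTwo.add_self_eq_zero, sgn]
  · simp [scomm]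

lemma scomm_t_zero_right (z w : ℕ) (ε : ZMod 2) (a : A) :
    scomm (sgn (ε * (p z + p w))) a (S.t z w 0) = 0 := by
  rw [S.t_zero]
  split_ifs with h
  · simp [h, scomm, CharTwo.add_self_eq_zero, sgn]
  · simp [scomm]

/-- The RTT relation in series form:
`(u - v) [t_{xy}(u), t_{zw}(v)] = ± (t_{zy}(u) t_{xw}(v) - t_{zy}(v) t_{xw}(u))`,
multiplied through by `u⁻¹ v⁻¹`. -/
theorem vInv_sub_uInv_mul_scomm_t {x y z w : ℕ} (hx : x < d) (hy : y < d) (hz : z < d)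
    (hw : w < d) :
    (vInv - uInv) * scomm (sgn ((p x + p y) * (p z + p w))) (inU (mk (S.t x y)))
        (inV (mk (S.t z w))) =
      sgn (p x * p y + p x * p z + p y * p z) • (uInv * vInv *
        (inU (mk (S.t z y)) * inV (mk (S.t x w)) - inV (mk (S.t z y)) * inU (mk (S.t x w)))) := by
  ext s r
  simp only [sub_mul, map_sub, coeff_coeff_vInv_mul, coeff_coeff_uInv_mul, mul_assoc,
    coeff_coeff_smul, coeff_coeff_scomm_inU_inV, coeff_coeff_inU_mul_inV,
    coeff_coeff_inV_mul_inU, coeff_mk]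
  rcases r with _ | r <;> rcases s with _ | s
  · simp
  · simp [scomm_t_zero_left]
  · simp [scomm_t_zero_right]
  · simp only [add_tsub_cancel_right, Nat.add_one_ne_zero, if_false]
    rw [S.rtt x y z w (r + 1) s hx hy hz hw, S.rtt x y z w r (s + 1) hx hy hz hw,
      show r + 1 + s - 1 = r + s by omega, show r + (s + 1) - 1 = r + s by omega, ← smul_sub,
      sum_range_min_sub_sum_range_min (fun g g' => S.t z y g * S.t x w g') r s]

end RTTSeries

section GaussSeries

lemma mk_delta [Ring A] (P : Prop) [Decidable P] :
    mk (fun r => if P ∧ r = 0 then (1 : A) else 0) = if P then 1 else 0 := by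
  ext r
  by_cases hP : P <;> simp [hP, coeff_one]

lemma coeff_mk_mul_mk_mul_mk [Ring A] (r : ℕ) (x y z : ℕ → A) :
    coeff r (mk x * mk y * mk z) =
      ∑ e1 ∈ range (r + 1), ∑ e2 ∈ range (r + 1 - e1), x e1 * y e2 * z (r - e1 - e2) := by
  simp only [mul_assoc, coeff_mul, Nat.sum_antidiagonal_eq_sum_range_succ_mk, coeff_mk,
    mul_sum]
  refine sum_congr rfl fun e1 he1 => ?_
  rw [Nat.succ_eq_add_one, show r - e1 + 1 = r + 1 - e1 by have := mem_range.mp he1; omega]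

lemma sum_map_mk_mul_map_mk_eq_ite [Ring A] {R : Type*} [Ring R] (φ : PowerSeries A →+* R)
    {m : ℕ} {x y : ℕ → ℕ → A} {P : Prop} [Decidable P]
    (h : ∀ r, ∑ q ∈ range m, ∑ e ∈ range (r + 1), x q e * y q (r - e) =
      if P ∧ r = 0 then 1 else 0) :
    ∑ q ∈ range m, φ (mk (x q)) * φ (mk (y q)) = if P then 1 else 0 := by
  have hmk : ∑ q ∈ range m, mk (x q) * mk (y q) = if P then 1 else 0 := by
    rw [← mk_delta]
    ext r
    simp only [map_sum, coeff_mul, Nat.sum_antidiagonal_eq_sum_range_succ_mk, coeff_mk, h]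
  simp only [← map_mul, ← map_sum, hmk]
  split_ifs <;> simp

variable [Ring A] [Algebra ℂ A] {T : ℕ → ℕ → ℕ → A} {n : ℕ} {μ : ℕ → ℕ}
  (G : Gauss T n μ)

lemma mk_E_diag (a i j : ℕ) : mk (G.E a a i j) = if i = j then 1 else 0 := by
  rw [← mk_delta]; exact congrArg mk (funext (G.E_diag a i j))

lemma mk_F_diag (a i j : ℕ) : mk (G.F a a i j) = if i = j then 1 else 0 := by
  rw [← mk_delta]; exact congrArg mk (funext (G.F_diag a i j))

lemma mk_E_of_lt {a b : ℕ} (h : b < a) (i j : ℕ) : mk (G.E a b i j) = 0 := by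
  ext r; simp [G.E_low a b i j r h]

lemma mk_F_of_lt {a b : ℕ} (h : a < b) (i j : ℕ) : mk (G.F a b i j) = 0 := by
  ext r; simp [G.F_high a b i j r h]

lemma mk_T_eq {a b i j : ℕ} (ha : a < n) (hb : b < n) (hi : i < μ a) (hj : j < μ b) :
    mk (T (off μ a + i) (off μ b + j)) =
      ∑ c ∈ range n, ∑ q1 ∈ range (μ c), ∑ q2 ∈ range (μ c),
        mk (G.F a c i q1) * mk (G.D c q1 q2) * mk (G.E c b q2 j) := by
  ext r
  simp only [coeff_mk, map_sum, coeff_mk_mul_mk_mul_mk, G.decomp a b i j r ha hb hi hj]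

lemma sum_map_D_mul_map_D' {R : Type*} [Ring R] (φ : PowerSeries A →+* R) {a i j : ℕ}
    (ha : a < n) (hi : i < μ a) (hj : j < μ a) :
    ∑ q ∈ range (μ a), φ (mk (G.D a i q)) * φ (mk (G.D' a q j)) = if i = j then 1 else 0 :=
  sum_map_mk_mul_map_mk_eq_ite φ fun r => G.D_inv a i j r ha hi hj

lemma sum_map_D'_mul_map_D {R : Type*} [Ring R] (φ : PowerSeries A →+* R) {a i j : ℕ}
    (ha : a < n) (hi : i < μ a) (hj : j < μ a) :
    ∑ q ∈ range (μ a), φ (mk (G.D' a i q)) * φ (mk (G.D a q j)) = if i = j then 1 else 0 :=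
  sum_map_mk_mul_map_mk_eq_ite φ fun r => G.D_inv' a i j r ha hi hj

variable (G : Gauss T 3 μ)

lemma mk_T_block00 {i q : ℕ} (hi : i < μ 0) (hq : q < μ 0) : mk (T i q) = mk (G.D 0 i q) := by
  simpa [off, sum_range_succ, mk_F_diag, mk_E_diag, mk_F_of_lt, mk_E_of_lt, hi, hq]
    using mk_T_eq G (a := 0) (b := 0) (by norm_num) (by norm_num) hi hq

lemma mk_T_block01 {i k : ℕ} (hi : i < μ 0) (hk : k < μ 1) :
    mk (T i (μ 0 + k)) = ∑ q ∈ range (μ 0), mk (G.D 0 i q) * mk (G.E 0 1 q k) := by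
  simpa [off, sum_range_succ, mk_F_diag, mk_E_diag, mk_F_of_lt, mk_E_of_lt, hi, hk]
    using mk_T_eq G (a := 0) (b := 1) (by norm_num) (by norm_num) hi hk

lemma mk_T_block10 {l q : ℕ} (hl : l < μ 1) (hq : q < μ 0) :
    mk (T (μ 0 + l) q) = ∑ q' ∈ range (μ 0), mk (G.F 1 0 l q') * mk (G.D 0 q' q) := by
  simpa [off, sum_range_succ, mk_F_diag, mk_E_diag, mk_F_of_lt, mk_E_of_lt, hl, hq]
    using mk_T_eq G (a := 1) (b := 0) (by norm_num) (by norm_num) hl hq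

lemma mk_T_block11 {l k : ℕ} (hl : l < μ 1) (hk : k < μ 1) :
    mk (T (μ 0 + l) (μ 0 + k)) =
      ∑ q' ∈ range (μ 0), ∑ q ∈ range (μ 0),
        mk (G.F 1 0 l q') * mk (G.D 0 q' q) * mk (G.E 0 1 q k) + mk (G.D 1 l k) := by
  simpa [off, sum_range_succ, mk_F_diag, mk_E_diag, mk_F_of_lt, mk_E_of_lt, hl, hk]
    using mk_T_eq G (a := 1) (b := 1) (by norm_num) (by norm_num) hl hk

lemma mk_T_block20 {h q : ℕ} (hh : h < μ 2) (hq : q < μ 0) :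
    mk (T (μ 0 + μ 1 + h) q) = ∑ q' ∈ range (μ 0), mk (G.F 2 0 h q') * mk (G.D 0 q' q) := by
  simpa [off, sum_range_succ, mk_F_diag, mk_E_diag, mk_F_of_lt, mk_E_of_lt, hh, hq]
    using mk_T_eq G (a := 2) (b := 0) (by norm_num) (by norm_num) hh hq

lemma mk_T_block21 {h k : ℕ} (hh : h < μ 2) (hk : k < μ 1) :
    mk (T (μ 0 + μ 1 + h) (μ 0 + k)) =
      ∑ q' ∈ range (μ 0), ∑ q ∈ range (μ 0),
        mk (G.F 2 0 h q') * mk (G.D 0 q' q) * mk (G.E 0 1 q k) +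
      ∑ l ∈ range (μ 1), mk (G.F 2 1 h l) * mk (G.D 1 l k) := by
  simpa [off, sum_range_succ, mk_F_diag, mk_E_diag, mk_F_of_lt, mk_E_of_lt, hh, hk]
    using mk_T_eq G (a := 2) (b := 1) (by norm_num) (by norm_num) hh hk

/-- The `(x, μ 0 + k)` entry of `T E⁻¹ = F D`. -/
def TEinv (x k : ℕ) : PowerSeries A :=
  mk (T x (μ 0 + k)) - ∑ q ∈ range (μ 0), mk (T x q) * mk (G.E 0 1 q k)

lemma TEinv_of_lt {x k : ℕ} (hx : x < μ 0) (hk : k < μ 1) : TEinv G x k = 0 := by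
  rw [TEinv, mk_T_block01 G hx hk, sub_eq_zero]
  exact sum_congr rfl fun q hq => by rw [mk_T_block00 G hx (mem_range.mp hq)]

lemma TEinv_block1 {l k : ℕ} (hl : l < μ 1) (hk : k < μ 1) :
    TEinv G (μ 0 + l) k = mk (G.D 1 l k) := by
  rw [TEinv, mk_T_block11 G hl hk, sub_eq_iff_eq_add', add_left_inj, sum_comm]
  exact sum_congr rfl fun q hq => by rw [mk_T_block10 G hl (mem_range.mp hq), sum_mul]

lemma TEinv_block2 {h k : ℕ} (hh : h < μ 2) (hk : k < μ 1) :
    TEinv G (μ 0 + μ 1 + h) k = ∑ l ∈ range (μ 1), mk (G.F 2 1 h l) * mk (G.D 1 l k) := by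
  rw [TEinv, mk_T_block21 G hh hk, sub_eq_iff_eq_add', add_left_inj, sum_comm]
  exact sum_congr rfl fun q hq => by rw [mk_T_block20 G hh (mem_range.mp hq), sum_mul]

end GaussSeries

section Commutation

variable [Ring A] [Algebra ℂ A] {d : ℕ} {p : ℕ → ZMod 2} {μ : ℕ → ℕ}
  {S : RTT A d p} (G : Gauss S.t 3 μ)

/-- `Ψ_{ik} = u⁻¹v⁻¹ ∑_q t_{iq}(u) (e_{qk}(v) - e_{qk}(u))`, by `T₀₁ = T₀₀ E₀₁`. -/
def psi (i k : ℕ) : PowerSeries (PowerSeries A) :=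
  uInv * vInv * (∑ q ∈ range (μ 0), inU (mk (S.t i q)) * inV (mk (G.E 0 1 q k)) -
    inU (mk (S.t i (μ 0 + k))))

lemma inV_mk_t_eq_sum {i k : ℕ} (hi : i < μ 0) (hk : k < μ 1) :
    inV (mk (S.t i (μ 0 + k))) =
      ∑ q ∈ range (μ 0), inV (mk (S.t i q)) * inV (mk (G.E 0 1 q k)) := by
  rw [mk_T_block01 G hi hk, map_sum]
  exact sum_congr rfl fun q hq => by rw [mk_T_block00 G hi (mem_range.mp hq), map_mul]

lemma inV_TEinv (x k : ℕ) :
    inV (TEinv G x k) = inV (mk (S.t x (μ 0 + k))) -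
      ∑ q ∈ range (μ 0), inV (mk (S.t x q)) * inV (mk (G.E 0 1 q k)) := by
  simp only [TEinv, map_sub, map_sum, map_mul]

lemma vInv_sub_uInv_mul_scomm_TEinv_eq (hd : μ 0 + μ 1 + μ 2 ≤ d) {i y k x : ℕ}
    (hi : i < μ 0) (hy : y < d) (hk : k < μ 1) (hx : x < d) :
    (vInv - uInv) * scomm (sgn ((p i + p y) * (p x + p (μ 0 + k)))) (inU (mk (S.t i y)))
        (inV (TEinv G x k)) =
      sgn (p i * p y + p i * p x + p y * p x) • (inV (mk (S.t x y)) * psi G i k -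
        ∑ q ∈ range (μ 0), inV (mk (S.t x q)) * (sgn ((p i + p y) * p q + p i * p y) •
          ((vInv - uInv) * scomm (sgn ((p i + p y) * (p q + p (μ 0 + k))))
            (inU (mk (S.t i y))) (inV (mk (G.E 0 1 q k)))))) := by
  set σ := sgn (p i * p y + p i * p x + p y * p x)
  have hsign : ∀ q, sgn ((p i + p y) * (p x + p q)) = σ * sgn ((p i + p y) * p q + p i * p y) :=
    fun q => by rw [← sgn_add]; congr 1; grind
  have hcol := vInv_sub_uInv_mul_scomm_t S (by omega : i < d) hy hx (by omega : μ 0 + k < d)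
  have hrow : ∀ q ∈ range (μ 0),
      (vInv - uInv) * scomm (sgn ((p i + p y) * (p x + p q))) (inU (mk (S.t i y)))
          (inV (mk (S.t x q))) * inV (mk (G.E 0 1 q k)) =
        σ • (uInv * vInv * (inU (mk (S.t x y)) * (inV (mk (S.t i q)) * inV (mk (G.E 0 1 q k))) -
          inV (mk (S.t x y)) * (inU (mk (S.t i q)) * inV (mk (G.E 0 1 q k))))) := fun q hq => by
    rw [vInv_sub_uInv_mul_scomm_t S (by omega) hy hx (by have := mem_range.mp hq; omega),
      smul_mul_assoc]
    simp only [sub_mul, mul_assoc]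
    rfl
  have hprod : (vInv - uInv) * scomm (sgn ((p i + p y) * (p x + p (μ 0 + k))))
      (inU (mk (S.t i y))) (∑ q ∈ range (μ 0), inV (mk (S.t x q)) * inV (mk (G.E 0 1 q k))) =
        σ • (uInv * vInv * (inU (mk (S.t x y)) * inV (mk (S.t i (μ 0 + k))) - inV (mk (S.t x y)) *
          ∑ q ∈ range (μ 0), inU (mk (S.t i q)) * inV (mk (G.E 0 1 q k)))) +
        σ • ∑ q ∈ range (μ 0), inV (mk (S.t x q)) * (sgn ((p i + p y) * p q + p i * p y) •
          ((vInv - uInv) * scomm (sgn ((p i + p y) * (p q + p (μ 0 + k))))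
            (inU (mk (S.t i y))) (inV (mk (G.E 0 1 q k))))) := by
    rw [mul_scomm_sum_mul _ commute_vInv_sub_uInv (p i + p y) (p x) (p (μ 0 + k)) p,
      sum_add_distrib, inV_mk_t_eq_sum G hi hk, sum_congr rfl hrow, ← smul_sum, mul_sum, mul_sum,
      ← sum_sub_distrib, mul_sum, smul_sum, smul_sum]
    congr 1
    exact sum_congr rfl fun q _ => by rw [hsign, mul_smul, mul_smul_comm]
  rw [inV_TEinv, scomm_sub_right, mul_sub, hcol, hprod, psi, ← smul_add, ← smul_sub]
  congr 1
  rw [← (commute_uInv_mul_vInv _).left_comm]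
  simp only [mul_sub]
  abel

lemma vInv_sub_uInv_mul_scomm_TEinv (hd : μ 0 + μ 1 + μ 2 ≤ d) {i y k : ℕ} (hi : i < μ 0)
    (hy : y < d) (hk : k < μ 1) {c : ℕ → PowerSeries (PowerSeries A)}
    (hc : ∀ j < μ 0, inV (mk (S.t j y)) = ∑ q ∈ range (μ 0), inV (mk (S.t j q)) * c q)
    {x : ℕ} (hx : x < d) :
    (vInv - uInv) * scomm (sgn ((p i + p y) * (p x + p (μ 0 + k)))) (inU (mk (S.t i y)))
        (inV (TEinv G x k)) =
      sgn (p i * p y + p i * p x + p y * p x) •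
        ((inV (mk (S.t x y)) - ∑ q ∈ range (μ 0), inV (mk (S.t x q)) * c q) * psi G i k) := by
  set commE : ℕ → PowerSeries (PowerSeries A) := fun q => sgn ((p i + p y) * p q + p i * p y) •
    ((vInv - uInv) * scomm (sgn ((p i + p y) * (p q + p (μ 0 + k)))) (inU (mk (S.t i y)))
      (inV (mk (G.E 0 1 q k))))
  have hcommE : ∀ q < μ 0, commE q = c q * psi G i k := by
    intro q hq
    rw [← sub_eq_zero]
    refine eq_zero_of_mul_sum_eq_zero (Z := fun q => commE q - c q * psi G i k)
      (fun a b ha hb => sum_map_D'_mul_map_D G inV (a := 0) (by norm_num) ha hb)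
      (fun j hj => ?_) hq
    have hrow := vInv_sub_uInv_mul_scomm_TEinv_eq G hd hi hy hk (x := j) (by omega)
    rw [TEinv_of_lt G hj hk, map_zero, scomm_zero_right, mul_zero, hc j hj, eq_comm,
      sgn_smul_eq_zero_iff, sum_mul, ← sum_sub_distrib] at hrow
    rw [← neg_eq_zero, ← hrow, ← sum_neg_distrib]
    refine sum_congr rfl fun q hq => ?_
    rw [mk_T_block00 G hj (mem_range.mp hq), mul_sub, neg_sub, mul_assoc]
  rw [vInv_sub_uInv_mul_scomm_TEinv_eq G hd hi hy hk hx, sub_mul, sum_mul]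
  congr 2
  exact sum_congr rfl fun q hq => by rw [mul_assoc, ← hcommE q (mem_range.mp hq)]

lemma scomm_t_F_eq_zero (hd : μ 0 + μ 1 + μ 2 ≤ d) {i y : ℕ} (hi : i < μ 0) (hy : y < d)
    {c : ℕ → PowerSeries (PowerSeries A)}
    (hc : ∀ j < μ 0, inV (mk (S.t j y)) = ∑ q ∈ range (μ 0), inV (mk (S.t j q)) * c q)
    {K : ℕ → PowerSeries (PowerSeries A)}
    (hK : ∀ x < d, inV (mk (S.t x y)) - ∑ q ∈ range (μ 0), inV (mk (S.t x q)) * c q = K x)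
    {h : ℕ} (hh : h < μ 2)
    (hKF : K (μ 0 + μ 1 + h) = ∑ l ∈ range (μ 1), inV (mk (G.F 2 1 h l)) * K (μ 0 + l))
    {l : ℕ} (hl : l < μ 1) :
    scomm (sgn ((p i + p y) * (p (μ 0 + μ 1 + h) + p (μ 0 + l)))) (inU (mk (S.t i y)))
      (inV (mk (G.F 2 1 h l))) = 0 := by
  apply eq_zero_of_vInv_sub_uInv_mul_eq_zero
  refine eq_zero_of_sum_mul_eq_zero (Z := fun l => (vInv - uInv) *
      scomm (sgn ((p i + p y) * (p (μ 0 + μ 1 + h) + p (μ 0 + l)))) (inU (mk (S.t i y)))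
        (inV (mk (G.F 2 1 h l))))
    (fun a b ha hb => sum_map_D_mul_map_D' G inV (a := 1) (by norm_num) ha hb)
    (fun k hk => ?_) hl
  have hrow2 := vInv_sub_uInv_mul_scomm_TEinv G hd hi hy hk hc (x := μ 0 + μ 1 + h) (by omega)
  rw [hK _ (by omega), hKF, TEinv_block2 G hh hk, map_sum] at hrow2
  simp only [map_mul] at hrow2
  rw [mul_scomm_sum_mul _ commute_vInv_sub_uInv (p i + p y) (p (μ 0 + μ 1 + h)) (p (μ 0 + k))
    (fun l => p (μ 0 + l)), sum_add_distrib] at hrow2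
  rw [eq_sub_of_add_eq hrow2, sub_eq_zero, sum_mul, smul_sum]
  refine sum_congr rfl fun l' hl' => ?_
  have hl'μ := mem_range.mp hl'
  have hrow1 := vInv_sub_uInv_mul_scomm_TEinv G hd hi hy hk hc (x := μ 0 + l') (by omega)
  rw [hK _ (by omega), TEinv_block1 G hl'μ hk] at hrow1
  rw [hrow1, mul_smul_comm, smul_smul, ← sgn_add, mul_assoc]
  congr 2
  grind

lemma scomm_t_F_of_lt (hd : μ 0 + μ 1 + μ 2 ≤ d) {i y h l : ℕ} (hi : i < μ 0) (hy : y < μ 0)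
    (hh : h < μ 2) (hl : l < μ 1) :
    scomm (sgn ((p i + p y) * (p (μ 0 + μ 1 + h) + p (μ 0 + l)))) (inU (mk (S.t i y)))
      (inV (mk (G.F 2 1 h l))) = 0 := by
  have hcol : ∀ x, inV (mk (S.t x y)) =
      ∑ q ∈ range (μ 0), inV (mk (S.t x q)) * if q = y then 1 else 0 := fun x => by
    simp [hy]
  exact scomm_t_F_eq_zero G hd hi (by omega) (fun j _ => hcol j) (K := 0)
    (fun x _ => by rw [← hcol, sub_self, Pi.zero_apply]) hh (by simp) hl

lemma scomm_t_F_block1 (hd : μ 0 + μ 1 + μ 2 ≤ d) {i j h l : ℕ} (hi : i < μ 0) (hj : j < μ 1)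
    (hh : h < μ 2) (hl : l < μ 1) :
    scomm (sgn ((p i + p (μ 0 + j)) * (p (μ 0 + μ 1 + h) + p (μ 0 + l))))
      (inU (mk (S.t i (μ 0 + j)))) (inV (mk (G.F 2 1 h l))) = 0 := by
  refine scomm_t_F_eq_zero G hd hi (by omega) (fun i' hi' => inV_mk_t_eq_sum G hi' hj)
    (K := fun x => inV (TEinv G x j)) (fun x _ => (inV_TEinv G x j).symm) hh ?_ hl
  rw [TEinv_block2 G hh hj, map_sum]
  exact sum_congr rfl fun l' hl' => by rw [TEinv_block1 G (mem_range.mp hl') hj, map_mul]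

lemma scomm_E_F (hd : μ 0 + μ 1 + μ 2 ≤ d) {i j h k : ℕ} (hi : i < μ 0) (hj : j < μ 1)
    (hh : h < μ 2) (hk : k < μ 1) :
    scomm (sgn ((p i + p (μ 0 + j)) * (p (μ 0 + μ 1 + h) + p (μ 0 + k))))
      (inU (mk (G.E 0 1 i j))) (inV (mk (G.F 2 1 h k))) = 0 := by
  refine eq_zero_of_mul_sum_eq_zero (Z := fun q =>
      scomm (sgn ((p q + p (μ 0 + j)) * (p (μ 0 + μ 1 + h) + p (μ 0 + k))))
        (inU (mk (G.E 0 1 q j))) (inV (mk (G.F 2 1 h k))))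
    (fun a b ha hb => sum_map_D'_mul_map_D G inU (a := 0) (by norm_num) ha hb)
    (fun i' hi' => ?_) hi
  have hB := scomm_t_F_block1 G hd hi' hj hh hk
  rw [mk_T_block01 G hi' hj, map_sum] at hB
  simp only [map_mul] at hB
  rw [scomm_sum_mul_left (p i') (p (μ 0 + j)) _ p] at hB
  rw [← hB]
  refine sum_congr rfl fun q hq => ?_
  rw [← mk_T_block00 G hi' (mem_range.mp hq), scomm_t_F_of_lt G hd hi' (mem_range.mp hq) hh hk,
    zero_mul, smul_zero, add_zero]

end Commutation

/-- For `μ = (μ 0, μ 1, μ 2)`, the Gauss blocks satisfy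
`[E_{1;i,j}(u), F_{2;h,k}(v)] = 0`, stated coefficientwise: the supercommutator of
`E_{1;i,j}^{(r)}` and `F_{2;h,k}^{(s)}` vanishes for all `r, s`. -/
theorem statement9 [Ring A] [Algebra ℂ A] {d : ℕ} {p : ℕ → ZMod 2} {μ : ℕ → ℕ}
    (S : RTT A d p) (G : Gauss S.t 3 μ) (hd : off μ 3 = d) :
    ∀ i j h k r s : ℕ, i < μ 0 → j < μ 1 → h < μ 2 → k < μ 1 →
      scomm (sgn ((p i + p (μ 0 + j)) * (p (μ 0 + μ 1 + h) + p (μ 0 + k))))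
        (G.E 0 1 i j r) (G.F 2 1 h k s) = 0 := by
  intro i j h k r s hi hj hh hk
  have hμ : μ 0 + μ 1 + μ 2 ≤ d := by simp [← hd, off, sum_range_succ]
  simpa [coeff_coeff_scomm_inU_inV] using
    congrArg (fun P => coeff r (coeff s P)) (scomm_E_F G hμ hi hj hh hk)

end SuperYangian
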